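/- arXiv:2201.06479 — 6 statements merged into one kernel-verified Lean document; each statement's English description precedes it below -/
import Mathlib

section
/- For every X = (X₁, X₂) ∈ ℝ², the matrix S_n(X) := D²Φ_n(X) · M(X) is symmetric, where Φ_n(X) = Σ_{j=0}^n a_{j,n} X₁^j X₂^{n−j} with coefficients defined by a_{0,n}=1 and the recursion a_{j+1,n} = ((n−j)(a·j+c·(n−j−1)))/((j+1)(b·j+d·(n−j−1))) · a_{j,n}, and M(X) is the 2×2 matrix with rows (a·X₁, b·X₁) and (c·X₂, d·X₂). -/
/-- The coefficient `a_{j,n}` of the polynomial `Φ_n`. -/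
noncomputable def ajn (a b c d : ℝ) (n j : ℕ) : ℝ :=
  (n.choose j : ℝ) * ∏ k ∈ Finset.range j,
    (a * k + c * ((n : ℝ) - k - 1)) / (b * k + d * ((n : ℝ) - k - 1))

/-- The polynomial `Φ_n`. -/
noncomputable def Phi (a b c d : ℝ) (n : ℕ) (x y : ℝ) : ℝ :=
  ∑ j ∈ Finset.range (n + 1), ajn a b c d n j * x ^ j * y ^ (n - j)


/-- Partial derivative with respect to the first variable. -/
noncomputable def pd1 (f : ℝ → ℝ → ℝ) (x y : ℝ) : ℝ := deriv (fun t => f t y) x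

/-- Partial derivative with respect to the second variable. -/
noncomputable def pd2 (f : ℝ → ℝ → ℝ) (x y : ℝ) : ℝ := deriv (fun t => f x t) y

/-- The Hessian matrix of a function of two real variables. -/
noncomputable def Hess (f : ℝ → ℝ → ℝ) (x y : ℝ) : Matrix (Fin 2) (Fin 2) ℝ :=
  !![pd1 (pd1 f) x y, pd1 (pd2 f) x y; pd2 (pd1 f) x y, pd2 (pd2 f) x y]

/-- The mobility matrix `M(X)`. -/
noncomputable def Mmat (a b c d x y : ℝ) : Matrix (Fin 2) (Fin 2) ℝ :=
  !![a * x, b * x; c * y, d * y]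

/-!
Write `Φ_n` as a binary form `∑ pⱼ xʲ yⁿ⁻ʲ`. On such forms the Euler operators `x ∂ₓ` and `y ∂_y`
act diagonally, with eigenvalues `j` and `n - j`. Using `∂ₓ∂_y Φ = ∂_y∂ₓ Φ`, the two off-diagonal
entries of `S_n` are `(b x ∂ₓ + d y ∂_y) ∂ₓΦ` and `(a x ∂ₓ + c y ∂_y) ∂_yΦ`, binary forms of
degree `n - 1` with coefficients `(j + 1)(b j + d (n - 1 - j)) a_{j+1,n}` and
`(n - j)(a j + c (n - 1 - j)) a_{j,n}`; these agree by the recursion defining `a_{j,n}`.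
-/

open Finset

noncomputable def binaryForm (n : ℕ) (p : ℕ → ℝ) (x y : ℝ) : ℝ :=
  ∑ j ∈ range (n + 1), p j * x ^ j * y ^ (n - j)

lemma Phi_eq_binaryForm (a b c d : ℝ) (n : ℕ) : Phi a b c d n = binaryForm n (ajn a b c d n) :=
  rfl

lemma mul_natCast_mul_pow_pred (x : ℝ) (j : ℕ) : x * (j * x ^ (j - 1)) = j * x ^ j := by
  cases j with
  | zero => simp
  | succ k => rw [Nat.add_sub_cancel, pow_succ]; ring

section binaryForm

variable (n : ℕ) (p : ℕ → ℝ)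

lemma pd1_binaryForm (x y : ℝ) :
    pd1 (binaryForm n p) x y = ∑ j ∈ range (n + 1), p j * (j * x ^ (j - 1)) * y ^ (n - j) := by
  unfold pd1 binaryForm
  rw [deriv_fun_sum fun j _ => by fun_prop]
  exact sum_congr rfl fun j _ => (((hasDerivAt_pow j x).const_mul (p j)).mul_const _).deriv

lemma pd2_binaryForm (x y : ℝ) :
    pd2 (binaryForm n p) x y =
      ∑ j ∈ range (n + 1), p j * x ^ j * ((n - j : ℕ) * y ^ (n - j - 1)) := by
  unfold pd2 binaryForm
  rw [deriv_fun_sum fun j _ => by fun_prop]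
  exact sum_congr rfl fun j _ => ((hasDerivAt_pow (n - j) y).const_mul _).deriv

lemma pd1_binaryForm_succ :
    pd1 (binaryForm (n + 1) p) = binaryForm n (fun j => (j + 1) * p (j + 1)) := by
  funext x y
  rw [pd1_binaryForm, sum_range_succ']
  simp only [CharP.cast_eq_zero, zero_mul, mul_zero, add_zero]
  refine sum_congr rfl fun j _ => ?_
  simp only [Nat.add_sub_cancel, Nat.add_sub_add_right]
  push_cast
  ring

lemma pd2_binaryForm_succ :
    pd2 (binaryForm (n + 1) p) = binaryForm n (fun j => ((n : ℝ) + 1 - j) * p j) := by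
  funext x y
  rw [pd2_binaryForm, sum_range_succ]
  simp only [Nat.sub_self, CharP.cast_eq_zero, zero_mul, mul_zero, add_zero]
  refine sum_congr rfl fun j hj => ?_
  have hjn : j ≤ n := Nat.lt_succ_iff.mp (mem_range.mp hj)
  rw [Nat.cast_sub (hjn.trans n.le_succ), show n + 1 - j - 1 = n - j by omega]
  push_cast
  ring

lemma pd1_pd2_binaryForm :
    pd1 (pd2 (binaryForm (n + 2) p)) = pd2 (pd1 (binaryForm (n + 2) p)) := by
  rw [pd2_binaryForm_succ, pd1_binaryForm_succ, pd1_binaryForm_succ, pd2_binaryForm_succ]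
  congr 1
  funext j
  push_cast
  ring

lemma euler_binaryForm (α β x y : ℝ) :
    α * x * pd1 (binaryForm n p) x y + β * y * pd2 (binaryForm n p) x y =
      binaryForm n (fun j => (α * j + β * ((n : ℝ) - j)) * p j) x y := by
  rw [pd1_binaryForm, pd2_binaryForm, mul_sum, mul_sum, ← sum_add_distrib]
  refine sum_congr rfl fun j hj => ?_
  have hjn : j ≤ n := Nat.lt_succ_iff.mp (mem_range.mp hj)
  have hx := mul_natCast_mul_pow_pred x j
  have hy := mul_natCast_mul_pow_pred y (n - j)
  rw [Nat.cast_sub hjn] at hy ⊢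
  linear_combination (α * p j * y ^ (n - j)) * hx + (β * p j * x ^ j) * hy

end binaryForm

lemma ajn_succ_mul (a b c d : ℝ) {n j : ℕ} (hj : j ≤ n)
    (hD : b * j + d * ((n : ℝ) - j - 1) ≠ 0) :
    ajn a b c d n (j + 1) * (j + 1) * (b * j + d * ((n : ℝ) - j - 1)) =
      ajn a b c d n j * ((n : ℝ) - j) * (a * j + c * ((n : ℝ) - j - 1)) := by
  have hchoose : (n.choose (j + 1) : ℝ) * (j + 1) = n.choose j * ((n : ℝ) - j) := by
    rw [← Nat.cast_sub hj]
    exact_mod_cast Nat.choose_succ_right_eq n j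
  unfold ajn
  rw [prod_range_succ]
  set P := ∏ k ∈ range j, (a * k + c * ((n : ℝ) - k - 1)) / (b * k + d * ((n : ℝ) - k - 1))
  calc _ = n.choose (j + 1) * (j + 1) * P *
        ((a * j + c * ((n : ℝ) - j - 1)) / (b * j + d * ((n : ℝ) - j - 1)) *
          (b * j + d * ((n : ℝ) - j - 1))) := by ring
    _ = _ := by rw [div_mul_cancel₀ _ hD, hchoose]; ring

lemma hess_mul_mobility_offDiag (a b c d : ℝ) {n : ℕ} (hn : 2 ≤ n)
    (hD : ∀ j < n, b * j + d * ((n : ℝ) - j - 1) ≠ 0) (x y : ℝ) :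
    pd1 (pd1 (Phi a b c d n)) x y * (b * x) + pd1 (pd2 (Phi a b c d n)) x y * (d * y) =
      pd2 (pd1 (Phi a b c d n)) x y * (a * x) + pd2 (pd2 (Phi a b c d n)) x y * (c * y) := by
  obtain ⟨m, rfl⟩ := Nat.exists_eq_add_of_le' hn
  rw [Phi_eq_binaryForm, pd1_pd2_binaryForm]
  set p := ajn a b c d (m + 2)
  calc _ = b * x * pd1 (pd1 (binaryForm (m + 2) p)) x y
        + d * y * pd2 (pd1 (binaryForm (m + 2) p)) x y := by ring
    _ = binaryForm (m + 1)
          (fun j => (b * j + d * (((m + 1 : ℕ) : ℝ) - j)) * ((j + 1) * p (j + 1))) x y := by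
      rw [pd1_binaryForm_succ, euler_binaryForm]
    _ = binaryForm (m + 1)
          (fun j => (a * j + c * (((m + 1 : ℕ) : ℝ) - j)) * ((((m + 1 : ℕ) : ℝ) + 1 - j) * p j))
          x y := by
      refine sum_congr rfl fun j hj => ?_
      have hj : j < m + 2 := mem_range.mp hj
      have hrec := ajn_succ_mul a b c d hj.le (hD j hj)
      push_cast at hrec ⊢
      linear_combination x ^ j * y ^ (m + 1 - j) * hrec
    _ = a * x * pd1 (pd2 (binaryForm (m + 2) p)) x y
        + c * y * pd2 (pd2 (binaryForm (m + 2) p)) x y := by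
      rw [pd2_binaryForm_succ, euler_binaryForm]
    _ = _ := by rw [pd1_pd2_binaryForm]; ring

lemma Matrix.isSymm_of_fin_two {α : Type*} {A : Matrix (Fin 2) (Fin 2) α} (h : A 0 1 = A 1 0) :
    A.IsSymm :=
  Matrix.IsSymm.ext_iff.2 fun i j => by fin_cases i <;> fin_cases j <;> simp [h]

theorem Sn_symm_general (a b c d : ℝ) (hb : 0 < b) (hd : 0 < d) (n : ℕ) (hn : 2 ≤ n) (x y : ℝ) :
    (Hess (Phi a b c d n) x y * Mmat a b c d x y).IsSymm := by
  have hD : ∀ j < n, b * j + d * ((n : ℝ) - j - 1) ≠ 0 := by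
    intro j hj
    have : (j : ℝ) + 1 ≤ n := by exact_mod_cast hj
    rcases j.eq_zero_or_pos with rfl | hj0
    · have : (2 : ℝ) ≤ n := by exact_mod_cast hn
      simp only [CharP.cast_eq_zero]
      nlinarith
    · have : (1 : ℝ) ≤ j := by exact_mod_cast hj0
      nlinarith
  apply Matrix.isSymm_of_fin_two
  simp only [Hess, Mmat, Matrix.mul_apply, Matrix.of_apply, Matrix.cons_val',
    Matrix.cons_val_fin_one, Matrix.cons_val_zero, Matrix.cons_val_one, Fin.sum_univ_two]
  exact hess_mul_mobility_offDiag a b c d hn hD x y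

/-- The matrix `S_n(X) = D²Φ_n(X) · M(X)` is symmetric. -/
theorem Sn_symm (a b c d : ℝ) (ha : 0 < a) (hb : 0 < b) (hc : 0 < c) (hd : 0 < d)
    (habcd : b * c < a * d) (n : ℕ) (hn : 2 ≤ n) (x y : ℝ) :
    (Hess (Phi a b c d n) x y * Mmat a b c d x y).IsSymm :=
  Sn_symm_general a b c d hb hd n hn x y
end

section
/- With A_{j,k} := (j+2)(n−k)·a_{j+2,n}·a_{k,n} − (n−j−1)(k+1)·a_{j+1,n}·a_{k+1,n} for 0 ≤ j,k ≤ n−2, one has the closed-form A_{j,k} = (a·d−b·c)·(n−1)(n−k)(n−j−1)(j+1−k)/(α_{j+1,n}·α_{k,n}) · a_{j+1,n}·a_{k,n}, where α_{k,n} := b·k + d·(n−k−1). -/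
/-- The coefficient `A_{j,k}`. -/
noncomputable def Ajk (a b c d : ℝ) (n j k : ℕ) : ℝ :=
  ((j : ℝ) + 2) * ((n : ℝ) - k) * ajn a b c d n (j + 2) * ajn a b c d n k
    - ((n : ℝ) - j - 1) * ((k : ℝ) + 1) * ajn a b c d n (j + 1) * ajn a b c d n (k + 1)

/-- `alpha b d n i` is the paper's `α_{i,n}`; the numerators of the factors of `ajn` are
`alpha a c n i`. -/
noncomputable def alpha (b d : ℝ) (n i : ℕ) : ℝ :=
  b * i + d * ((n : ℝ) - i - 1)

lemma alpha_mul_alpha_sub_alpha_mul_alpha (a b c d : ℝ) (n i k : ℕ) :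
    alpha a c n i * alpha b d n k - alpha a c n k * alpha b d n i =
      (a * d - b * c) * ((n : ℝ) - 1) * ((i : ℝ) - k) := by
  unfold alpha
  ring

lemma alpha_pos_of_succ_lt {b d : ℝ} (hb : 0 < b) (hd : 0 < d) {n i : ℕ} (hi : i + 1 < n) :
    0 < alpha b d n i := by
  have hi' : (i : ℝ) + 1 < n := by exact_mod_cast hi
  have : 0 < (n : ℝ) - i - 1 := by linarith
  unfold alpha
  positivity

lemma alpha_pos_of_pos_of_lt {b d : ℝ} (hb : 0 < b) (hd : 0 < d) {n i : ℕ} (hi0 : 0 < i)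
    (hi : i < n) : 0 < alpha b d n i := by
  have hi' : (i : ℝ) + 1 ≤ n := by exact_mod_cast hi
  have : 0 ≤ (n : ℝ) - i - 1 := by linarith
  unfold alpha
  positivity

lemma cast_choose_succ_mul (n i : ℕ) (hi : i ≤ n) :
    (n.choose (i + 1) : ℝ) * ((i : ℝ) + 1) = (n.choose i : ℝ) * ((n : ℝ) - i) := by
  have := congrArg (Nat.cast : ℕ → ℝ) (Nat.choose_succ_right_eq n i)
  push_cast [Nat.cast_sub hi] at this
  exact this

lemma ajn_succ (a b c d : ℝ) (n i : ℕ) (hi : i ≤ n) :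
    ajn a b c d n (i + 1) =
      ((n : ℝ) - i) / ((i : ℝ) + 1) * (alpha a c n i / alpha b d n i) * ajn a b c d n i := by
  have hchoose : (n.choose (i + 1) : ℝ) = ((n : ℝ) - i) / ((i : ℝ) + 1) * n.choose i := by
    rw [div_mul_eq_mul_div, eq_div_iff (by positivity), cast_choose_succ_mul n i hi, mul_comm]
  rw [ajn, ajn, Finset.prod_range_succ, hchoose, alpha, alpha]
  ring

theorem Ajk_closed_form_general (a b c d : ℝ) (hb : 0 < b) (hd : 0 < d)
    (n : ℕ) (hn : 2 ≤ n) (j k : ℕ) (hj : j ≤ n - 2) (hk : k ≤ n - 2) :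
    Ajk a b c d n j k =
      (a * d - b * c) * ((n : ℝ) - 1) * ((n : ℝ) - k) * ((n : ℝ) - j - 1) *
        ((j : ℝ) + 1 - k) /
        ((b * ((j : ℝ) + 1) + d * ((n : ℝ) - (j + 1) - 1)) *
          (b * k + d * ((n : ℝ) - k - 1))) *
        ajn a b c d n (j + 1) * ajn a b c d n k := by
  have hαj := (alpha_pos_of_pos_of_lt hb hd (Nat.succ_pos j) (by omega : j + 1 < n)).ne'
  have hαk := (alpha_pos_of_succ_lt hb hd (by omega : k + 1 < n)).ne'
  have hcross := alpha_mul_alpha_sub_alpha_mul_alpha a b c d n (j + 1) k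
  have hα : b * ((j : ℝ) + 1) + d * ((n : ℝ) - (j + 1) - 1) = alpha b d n (j + 1) := by
    simp [alpha]
  rw [hα, ← alpha, Ajk, ajn_succ a b c d n (j + 1) (by omega), ajn_succ a b c d n k (by omega)]
  push_cast at hcross ⊢
  field_simp
  linear_combination ((n : ℝ) - k) * ((j : ℝ) + 2) * ((n : ℝ) - j - 1) *
    ajn a b c d n (j + 1) * ajn a b c d n k * hcross

/-- Closed form formula for the coefficients `A_{j,k}`. -/
theorem Ajk_closed_form (a b c d : ℝ) (ha : 0 < a) (hb : 0 < b) (hc : 0 < c) (hd : 0 < d)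
    (n : ℕ) (hn : 2 ≤ n) (j k : ℕ) (hj : j ≤ n - 2) (hk : k ≤ n - 2) :
    Ajk a b c d n j k =
      (a * d - b * c) * ((n : ℝ) - 1) * ((n : ℝ) - k) * ((n : ℝ) - j - 1) *
        ((j : ℝ) + 1 - k) /
        ((b * ((j : ℝ) + 1) + d * ((n : ℝ) - (j + 1) - 1)) *
          (b * k + d * ((n : ℝ) - k - 1))) *
        ajn a b c d n (j + 1) * ajn a b c d n k :=
  Ajk_closed_form_general a b c d hb hd n hn j k hj hk
end

section
/- The polynomial Φ_n is convex on the closed first quadrant [0,∞)². -/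
open Finset

noncomputable def binomialForm (n : ℕ) (m : ℕ → ℝ) (x y : ℝ) : ℝ :=
  ∑ j ∈ range (n + 1), (n.choose j : ℝ) * m j * x ^ j * y ^ (n - j)

theorem binomialForm_zero (m : ℕ → ℝ) (x y : ℝ) : binomialForm 0 m x y = m 0 := by
  simp [binomialForm]

theorem binomialForm_succ (n : ℕ) (m : ℕ → ℝ) (x y : ℝ) :
    binomialForm (n + 1) m x y =
      x * binomialForm n (fun j => m (j + 1)) x y + y * binomialForm n m x y := by
  have hy : y * binomialForm n m x y =
      ∑ j ∈ range (n + 2), (n.choose j : ℝ) * m j * x ^ j * y ^ (n + 1 - j) := by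
    rw [sum_range_succ, Nat.choose_succ_self, Nat.cast_zero, zero_mul, zero_mul, zero_mul,
      add_zero, binomialForm, mul_sum]
    refine sum_congr rfl fun j hj => ?_
    rw [Nat.sub_add_comm (Nat.lt_succ_iff.mp (mem_range.mp hj)), pow_succ]
    ring
  rw [hy, binomialForm, binomialForm, sum_range_succ', sum_range_succ' _ (n + 1), mul_sum,
    ← add_assoc, ← sum_add_distrib]
  congr 1
  · refine sum_congr rfl fun j _ => ?_
    rw [Nat.choose_succ_succ', Nat.succ_sub_succ, Nat.cast_add, pow_succ]
    ring
  · simp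

theorem hasDerivAt_binomialForm_succ (n : ℕ) (m : ℕ → ℝ) (x y u v t : ℝ) :
    HasDerivAt (fun t => binomialForm (n + 1) m (x + t * u) (y + t * v))
      ((n + 1) * (u * binomialForm n (fun j => m (j + 1)) (x + t * u) (y + t * v) +
        v * binomialForm n m (x + t * u) (y + t * v))) t := by
  have hX : HasDerivAt (fun t => x + t * u) u t := by
    simpa using ((hasDerivAt_id t).mul_const u).const_add x
  have hY : HasDerivAt (fun t => y + t * v) v t := by
    simpa using ((hasDerivAt_id t).mul_const v).const_add y
  induction n generalizing m with
  | zero =>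
    simp only [binomialForm_succ, binomialForm_zero]
    exact ((hX.mul_const (m 1)).add (hY.mul_const (m 0))).congr_deriv (by push_cast; ring)
  | succ n ih =>
    have h := (hX.fun_mul (ih fun j => m (j + 1))).fun_add (hY.fun_mul (ih m))
    simp only [← binomialForm_succ] at h
    refine h.congr_deriv ?_
    rw [binomialForm_succ n (fun j => m (j + 1)), binomialForm_succ n m]
    push_cast
    ring

theorem binomialForm_nonneg {n : ℕ} {m : ℕ → ℝ} (hm : ∀ j ≤ n, 0 ≤ m j) {x y : ℝ}
    (hx : 0 ≤ x) (hy : 0 ≤ y) : 0 ≤ binomialForm n m x y :=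
  sum_nonneg fun j hj => by
    have := hm j (Nat.lt_succ_iff.mp (mem_range.mp hj))
    positivity

theorem quadratic_nonneg_of_sq_le_mul {A B C : ℝ} (hA : 0 ≤ A) (hC : 0 ≤ C) (h : B ^ 2 ≤ A * C)
    (u v : ℝ) : 0 ≤ A * u ^ 2 + 2 * B * (u * v) + C * v ^ 2 := by
  rcases hA.eq_or_lt with rfl | hA
  · obtain rfl : B = 0 := pow_eq_zero_iff two_ne_zero |>.mp <|
      le_antisymm (by simpa using h) (sq_nonneg B)
    simpa using mul_nonneg hC (sq_nonneg v)
  · refine nonneg_of_mul_nonneg_right ?_ hA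
    have key : A * (A * u ^ 2 + 2 * B * (u * v) + C * v ^ 2) =
        (A * u + B * v) ^ 2 + (A * C - B ^ 2) * v ^ 2 := by ring
    rw [key]
    exact add_nonneg (sq_nonneg _) (mul_nonneg (sub_nonneg.mpr h) (sq_nonneg v))

section LogConvex

variable {n : ℕ} {m : ℕ → ℝ}

theorem two_mul_mul_le_of_logConvex (hm : ∀ j ≤ n + 2, 0 ≤ m j)
    (hlog : ∀ k ≤ n, m (k + 1) ^ 2 ≤ m k * m (k + 2)) {i j : ℕ} (hi : i ≤ n) (hj : j ≤ n) :
    2 * (m (i + 1) * m (j + 1)) ≤ m (i + 2) * m j + m i * m (j + 2) := by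
  have hmi := mul_nonneg (hm i (by omega)) (hm (i + 2) (by omega))
  refine two_mul_le_add_of_sq_le_mul (mul_nonneg (hm _ (by omega)) (hm _ (by omega)))
    (mul_nonneg (hm _ (by omega)) (hm _ (by omega))) ?_
  calc (m (i + 1) * m (j + 1)) ^ 2 = m (i + 1) ^ 2 * m (j + 1) ^ 2 := mul_pow _ _ _
    _ ≤ (m i * m (i + 2)) * (m j * m (j + 2)) :=
      mul_le_mul (hlog i hi) (hlog j hj) (sq_nonneg _) hmi
    _ = m (i + 2) * m j * (m i * m (j + 2)) := by ring

theorem sq_binomialForm_shift_le (hm : ∀ j ≤ n + 2, 0 ≤ m j)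
    (hlog : ∀ k ≤ n, m (k + 1) ^ 2 ≤ m k * m (k + 2)) {x y : ℝ} (hx : 0 ≤ x) (hy : 0 ≤ y) :
    binomialForm n (fun j => m (j + 1)) x y ^ 2 ≤
      binomialForm n (fun j => m (j + 2)) x y * binomialForm n m x y := by
  have expand : binomialForm n (fun j => m (j + 2)) x y * binomialForm n m x y
      + binomialForm n m x y * binomialForm n (fun j => m (j + 2)) x y
      - 2 * (binomialForm n (fun j => m (j + 1)) x y * binomialForm n (fun j => m (j + 1)) x y) =
      ∑ i ∈ range (n + 1), ∑ j ∈ range (n + 1),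
        ((n.choose i : ℝ) * x ^ i * y ^ (n - i)) * ((n.choose j : ℝ) * x ^ j * y ^ (n - j)) *
          (m (i + 2) * m j + m i * m (j + 2) - 2 * (m (i + 1) * m (j + 1))) := by
    rw [binomialForm, binomialForm, binomialForm, sum_mul_sum, sum_mul_sum, sum_mul_sum,
      ← sum_add_distrib, mul_sum, ← sum_sub_distrib]
    refine sum_congr rfl fun i _ => ?_
    rw [← sum_add_distrib, mul_sum, ← sum_sub_distrib]
    refine sum_congr rfl fun j _ => ?_
    ring
  have : 0 ≤ ∑ i ∈ range (n + 1), ∑ j ∈ range (n + 1),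
      ((n.choose i : ℝ) * x ^ i * y ^ (n - i)) * ((n.choose j : ℝ) * x ^ j * y ^ (n - j)) *
        (m (i + 2) * m j + m i * m (j + 2) - 2 * (m (i + 1) * m (j + 1))) :=
    sum_nonneg fun i hi => sum_nonneg fun j hj => mul_nonneg (by positivity) <| sub_nonneg.mpr <|
      two_mul_mul_le_of_logConvex hm hlog (Nat.lt_succ_iff.mp (mem_range.mp hi))
        (Nat.lt_succ_iff.mp (mem_range.mp hj))
  nlinarith

end LogConvex

theorem convexOn_of_convexOn_lineMap {E : Type*} [AddCommGroup E] [Module ℝ E] {s : Set E}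
    {f : E → ℝ} (hs : Convex ℝ s)
    (h : ∀ p ∈ s, ∀ q ∈ s, ConvexOn ℝ (Set.Icc (0 : ℝ) 1) (f ∘ AffineMap.lineMap p q)) :
    ConvexOn ℝ s f := by
  refine ⟨hs, fun p hp q hq α β hα hβ hαβ => ?_⟩
  have := (h p hp q hq).2 (Set.left_mem_Icc.mpr zero_le_one) (Set.right_mem_Icc.mpr zero_le_one)
    hα hβ hαβ
  have hα' : 1 - β = α := by linarith
  simpa [AffineMap.lineMap_apply_module, hα'] using this

theorem convexOn_binomialForm {n : ℕ} {m : ℕ → ℝ} (hm : ∀ j ≤ n + 2, 0 ≤ m j)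
    (hlog : ∀ k ≤ n, m (k + 1) ^ 2 ≤ m k * m (k + 2)) :
    ConvexOn ℝ {p : ℝ × ℝ | 0 ≤ p.1 ∧ 0 ≤ p.2} (fun p => binomialForm (n + 2) m p.1 p.2) := by
  have hquadrant : Convex ℝ {p : ℝ × ℝ | 0 ≤ p.1 ∧ 0 ≤ p.2} := (convex_Ici 0).prod (convex_Ici 0)
  refine convexOn_of_convexOn_lineMap hquadrant fun p hp q hq => ?_
  have hline : ∀ t : ℝ, AffineMap.lineMap p q t = (p.1 + t * (q.1 - p.1), p.2 + t * (q.2 - p.2)) :=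
    fun t => by
      ext <;> simp only [AffineMap.lineMap_apply_module, Prod.fst_add, Prod.snd_add, Prod.smul_fst,
        Prod.smul_snd, smul_eq_mul] <;> ring
  simp only [Function.comp_def, hline]
  set u := q.1 - p.1
  set v := q.2 - p.2
  set X := fun t : ℝ => p.1 + t * u
  set Y := fun t : ℝ => p.2 + t * v
  have hf' := hasDerivAt_binomialForm_succ (n + 1) m p.1 p.2 u v
  have hf'' : ∀ t, HasDerivAt (fun t => ((n + 1 : ℕ) + 1 : ℝ) *
      (u * binomialForm (n + 1) (fun j => m (j + 1)) (X t) (Y t) +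
        v * binomialForm (n + 1) m (X t) (Y t)))
      (((n + 1 : ℕ) + 1 : ℝ) * (n + 1) *
        (binomialForm n (fun j => m (j + 2)) (X t) (Y t) * u ^ 2 +
          2 * binomialForm n (fun j => m (j + 1)) (X t) (Y t) * (u * v) +
          binomialForm n m (X t) (Y t) * v ^ 2)) t := fun t =>
    ((((hasDerivAt_binomialForm_succ n (fun j => m (j + 1)) p.1 p.2 u v t).const_mul u).add
      ((hasDerivAt_binomialForm_succ n m p.1 p.2 u v t).const_mul v)).const_mul _).congr_deriv
      (by ring)
  refine convexOn_of_hasDerivWithinAt2_nonneg (convex_Icc 0 1)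
    (fun t _ => (hf' t).continuousAt.continuousWithinAt)
    (fun t _ => (hf' t).hasDerivWithinAt) (fun t _ => (hf'' t).hasDerivWithinAt) fun t ht => ?_
  rw [interior_Icc] at ht
  obtain ⟨hX, hY⟩ : 0 ≤ X t ∧ 0 ≤ Y t := by
    simpa [hline] using hquadrant.lineMap_mem hp hq ⟨ht.1.le, ht.2.le⟩
  have := quadratic_nonneg_of_sq_le_mul
    (binomialForm_nonneg (fun j hj => hm (j + 2) (by omega)) hX hY)
    (binomialForm_nonneg (fun j hj => hm j (by omega)) hX hY)
    (sq_binomialForm_shift_le hm hlog hX hY) u v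
  positivity

noncomputable def phiRatio (a b c d : ℝ) (n k : ℕ) : ℝ :=
  (a * k + c * ((n : ℝ) - k - 1)) / (b * k + d * ((n : ℝ) - k - 1))

theorem Phi_eq_binomialForm (a b c d : ℝ) (n : ℕ) (x y : ℝ) :
    Phi a b c d n x y = binomialForm n (fun j => ∏ k ∈ range j, phiRatio a b c d n k) x y :=
  rfl

theorem mul_add_mul_sub_pos {p q : ℝ} (hp : 0 < p) (hq : 0 < q) {n k : ℕ} (hn : 2 ≤ n)
    (hk : k < n) : 0 < p * k + q * ((n : ℝ) - k - 1) := by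
  have hn' : (2 : ℝ) ≤ n := by exact_mod_cast hn
  have hk' : (k : ℝ) + 1 ≤ n := by exact_mod_cast hk
  rcases Nat.eq_zero_or_pos k with rfl | hk0
  · push_cast; nlinarith
  · have : (0 : ℝ) < k := by exact_mod_cast hk0
    nlinarith

section PhiRatio

variable {a b c d : ℝ} {n k : ℕ}

theorem phiRatio_pos (ha : 0 < a) (hb : 0 < b) (hc : 0 < c) (hd : 0 < d) (hn : 2 ≤ n)
    (hk : k < n) : 0 < phiRatio a b c d n k :=
  div_pos (mul_add_mul_sub_pos ha hc hn hk) (mul_add_mul_sub_pos hb hd hn hk)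

theorem phiRatio_le_succ (hb : 0 < b) (hd : 0 < d) (habcd : b * c ≤ a * d) (hk : k + 2 ≤ n) :
    phiRatio a b c d n k ≤ phiRatio a b c d n (k + 1) := by
  unfold phiRatio
  -- after cross-multiplying, the difference of the two sides is `(n - 1) (a d - b c)`
  rw [div_le_div_iff₀ (mul_add_mul_sub_pos hb hd (by omega) (by omega))
    (mul_add_mul_sub_pos hb hd (by omega) (by omega))]
  have hn : (1 : ℝ) ≤ n := by exact_mod_cast (show 1 ≤ n by omega)
  push_cast
  nlinarith [mul_nonneg (sub_nonneg.mpr habcd) (sub_nonneg.mpr hn)]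

theorem sq_prod_range_succ_le {r : ℕ → ℝ} (hr : 0 ≤ r k) (hmono : r k ≤ r (k + 1)) :
    (∏ i ∈ range (k + 1), r i) ^ 2 ≤ (∏ i ∈ range k, r i) * ∏ i ∈ range (k + 2), r i := by
  rw [prod_range_succ _ (k + 1), prod_range_succ]
  set P := ∏ i ∈ range k, r i
  calc (P * r k) ^ 2 = P ^ 2 * r k * r k := by ring
    _ ≤ P ^ 2 * r k * r (k + 1) := mul_le_mul_of_nonneg_left hmono (by positivity)
    _ = P * (P * r k * r (k + 1)) := by ring

end PhiRatio

/-- The polynomial `Φ_n` is convex on the closed first quadrant. -/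
theorem Phi_convexOn (a b c d : ℝ) (ha : 0 < a) (hb : 0 < b) (hc : 0 < c) (hd : 0 < d)
    (habcd : b * c < a * d) (n : ℕ) (hn : 2 ≤ n) :
    ConvexOn ℝ {p : ℝ × ℝ | 0 ≤ p.1 ∧ 0 ≤ p.2} (fun p => Phi a b c d n p.1 p.2) := by
  obtain ⟨N, rfl⟩ := Nat.exists_eq_add_of_le' hn
  have hratio : ∀ k < N + 2, 0 < phiRatio a b c d (N + 2) k :=
    fun k hk => phiRatio_pos ha hb hc hd hn hk
  simp only [Phi_eq_binomialForm]
  refine convexOn_binomialForm (fun j hj => prod_nonneg fun k hk => ?_) fun k hk => ?_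
  · exact (hratio k ((mem_range.mp hk).trans_le hj)).le
  · exact sq_prod_range_succ_le (hratio k (by omega)).le
      (phiRatio_le_succ hb hd habcd.le (by omega))
end

section
/- For every 1 ≤ j ≤ n, the coefficient a_{j,n} satisfies C(n,j)·(c/d)^j ≤ a_{j,n} ≤ C(n,j)·(a/b)^j. -/
/-!
Writing `m = n - 1`, the `k`-th factor of the product is the weighted mediant
`(a k + c (m - k)) / (b k + d (m - k))` of `c / d` and `a / b`, with nonnegative weights that do
not both vanish since `m ≥ 1`. As `c / d < a / b`, every factor lies in `[c / d, a / b]`, and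
multiplying the `j` factors gives the bounds.
-/

section Mediant

variable {K : Type*} [Field K] [LinearOrder K] [IsStrictOrderedRing K] {a b c d x y : K}

theorem div_le_mediant (hd : 0 < d) (hden : 0 < b * x + d * y) (hx : 0 ≤ x)
    (h : b * c ≤ a * d) : c / d ≤ (a * x + c * y) / (b * x + d * y) := by
  rw [div_le_div_iff₀ hd hden]
  nlinarith [mul_le_mul_of_nonneg_right h hx]

theorem mediant_le_div (hb : 0 < b) (hden : 0 < b * x + d * y) (hy : 0 ≤ y)
    (h : b * c ≤ a * d) : (a * x + c * y) / (b * x + d * y) ≤ a / b := by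
  rw [div_le_div_iff₀ hden hb]
  nlinarith [mul_le_mul_of_nonneg_right h hy]

end Mediant

theorem ajn_factor_denom_pos {b d : ℝ} (hb : 0 < b) (hd : 0 < d) {n k : ℕ} (hn : 2 ≤ n)
    (hk : k < n) : 0 < b * k + d * ((n : ℝ) - k - 1) := by
  rcases k.eq_zero_or_pos with rfl | hk0
  · have : (2 : ℝ) ≤ n := by exact_mod_cast hn
    simp only [Nat.cast_zero]
    nlinarith
  · have : (0 : ℝ) < k := by exact_mod_cast hk0
    have : (k : ℝ) + 1 ≤ n := by exact_mod_cast hk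
    nlinarith

theorem ajn_bounds_general (a b c d : ℝ) (hb : 0 < b) (hc : 0 < c) (hd : 0 < d)
    (habcd : b * c < a * d) (n : ℕ) (hn : 2 ≤ n) (j : ℕ) (hj2 : j ≤ n) :
    (n.choose j : ℝ) * (c / d) ^ j ≤ ajn a b c d n j ∧
      ajn a b c d n j ≤ (n.choose j : ℝ) * (a / b) ^ j := by
  have factor_mem : ∀ k ∈ Finset.range j,
      c / d ≤ (a * k + c * ((n : ℝ) - k - 1)) / (b * k + d * ((n : ℝ) - k - 1)) ∧
      (a * k + c * ((n : ℝ) - k - 1)) / (b * k + d * ((n : ℝ) - k - 1)) ≤ a / b := by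
    intro k hk
    have hkn : k < n := (Finset.mem_range.mp hk).trans_le hj2
    have hden := ajn_factor_denom_pos hb hd hn hkn
    have hnk : (0 : ℝ) ≤ (n : ℝ) - k - 1 := by
      have : (k : ℝ) + 1 ≤ n := by exact_mod_cast hkn
      linarith
    exact ⟨div_le_mediant hd hden k.cast_nonneg habcd.le,
      mediant_le_div hb hden hnk habcd.le⟩
  have hcd : 0 ≤ c / d := by positivity
  unfold ajn
  constructor
  · gcongr
    simpa only [Finset.prod_const, Finset.card_range] using
      Finset.prod_le_prod (fun _ _ => hcd) fun k hk => (factor_mem k hk).1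
  · gcongr
    simpa only [Finset.prod_const, Finset.card_range] using
      Finset.prod_le_prod (fun k hk => hcd.trans (factor_mem k hk).1) fun k hk =>
        (factor_mem k hk).2

/-- Two-sided bounds on the coefficients `a_{j,n}`. -/
theorem ajn_bounds (a b c d : ℝ) (ha : 0 < a) (hb : 0 < b) (hc : 0 < c) (hd : 0 < d)
    (habcd : b * c < a * d) (n : ℕ) (hn : 2 ≤ n) (j : ℕ) (hj1 : 1 ≤ j) (hj2 : j ≤ n) :
    (n.choose j : ℝ) * (c / d) ^ j ≤ ajn a b c d n j ∧
      ajn a b c d n j ≤ (n.choose j : ℝ) * (a / b) ^ j :=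
  ajn_bounds_general a b c d hb hc hd habcd n hn j hj2
end

section
/- For every X = (X₁, X₂) ∈ [0,∞)², the polynomial Φ_n satisfies the two-sided bound (c·X₁ + d·X₂)^n / d^n ≤ Φ_n(X) ≤ (a·X₁ + b·X₂)^n / b^n. -/
open Finset

lemma div_le_mediant_and_mediant_le_div {a b c d p q : ℝ} (hb : 0 < b) (hd : 0 < d)
    (hbc : b * c ≤ a * d) (hp : 0 ≤ p) (hq : 0 ≤ q) (hden : 0 < b * p + d * q) :
    c / d ≤ (a * p + c * q) / (b * p + d * q) ∧ (a * p + c * q) / (b * p + d * q) ≤ a / b := by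
  constructor
  · rw [div_le_div_iff₀ hd hden]
    nlinarith [mul_le_mul_of_nonneg_right hbc hp]
  · rw [div_le_div_iff₀ hden hb]
    nlinarith [mul_le_mul_of_nonneg_right hbc hq]

lemma pow_card_le_prod_and_prod_le_pow_card {ι R : Type*} [CommSemiring R] [PartialOrder R]
    [IsOrderedRing R] {s : Finset ι} {f : ι → R} {l u : R} (hl : 0 ≤ l)
    (hf : ∀ i ∈ s, l ≤ f i ∧ f i ≤ u) :
    l ^ s.card ≤ ∏ i ∈ s, f i ∧ ∏ i ∈ s, f i ≤ u ^ s.card := by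
  rw [← prod_const, ← prod_const]
  exact ⟨prod_le_prod (fun _ _ => hl) fun i hi => (hf i hi).1,
    prod_le_prod (fun i hi => hl.trans (hf i hi).1) fun i hi => (hf i hi).2⟩

lemma ajn_factor_bounds {a b c d : ℝ} (hb : 0 < b) (hd : 0 < d) (hbc : b * c ≤ a * d)
    {n k : ℕ} (hn : 2 ≤ n) (hk : k < n) :
    c / d ≤ (a * k + c * ((n : ℝ) - k - 1)) / (b * k + d * ((n : ℝ) - k - 1)) ∧
      (a * k + c * ((n : ℝ) - k - 1)) / (b * k + d * ((n : ℝ) - k - 1)) ≤ a / b := by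
  have hkn : (k : ℝ) + 1 ≤ n := by exact_mod_cast hk
  have hn' : (2 : ℝ) ≤ n := by exact_mod_cast hn
  have hk0 : (0 : ℝ) ≤ k := k.cast_nonneg
  refine div_le_mediant_and_mediant_le_div hb hd hbc hk0 (by linarith) ?_
  -- `k` and `n - k - 1` sum to `n - 1 ≥ 1`, so one of them is positive
  rcases le_or_gt (k : ℝ) (1 / 2) with hk1 | hk1 <;> nlinarith

lemma choose_mul_pow_le_ajn_and_ajn_le {a b c d : ℝ} (hb : 0 < b) (hc : 0 < c) (hd : 0 < d)
    (hbc : b * c ≤ a * d) {n j : ℕ} (hn : 2 ≤ n) (hj : j ≤ n) :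
    (n.choose j : ℝ) * (c / d) ^ j ≤ ajn a b c d n j ∧
      ajn a b c d n j ≤ (n.choose j : ℝ) * (a / b) ^ j := by
  obtain ⟨hlow, hupp⟩ := card_range j ▸ pow_card_le_prod_and_prod_le_pow_card
    (div_nonneg hc.le hd.le) fun k hk =>
      ajn_factor_bounds hb hd hbc hn ((mem_range.mp hk).trans_le hj)
  exact ⟨by unfold ajn; gcongr, by unfold ajn; gcongr⟩

lemma add_pow_div_pow_eq_sum {e d : ℝ} (hd : d ≠ 0) (n : ℕ) (x y : ℝ) :
    (e * x + d * y) ^ n / d ^ n =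
      ∑ j ∈ range (n + 1), (n.choose j : ℝ) * (e / d) ^ j * x ^ j * y ^ (n - j) := by
  rw [← div_pow, show (e * x + d * y) / d = e / d * x + y by field_simp, add_pow]
  refine sum_congr rfl fun j _ => ?_
  ring

theorem Phi_bounds_general (a b c d : ℝ) (hb : 0 < b) (hc : 0 < c) (hd : 0 < d)
    (habcd : b * c < a * d) (n : ℕ) (hn : 2 ≤ n) (x y : ℝ) (hx : 0 ≤ x) (hy : 0 ≤ y) :
    (c * x + d * y) ^ n / d ^ n ≤ Phi a b c d n x y ∧
      Phi a b c d n x y ≤ (a * x + b * y) ^ n / b ^ n := by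
  have hcoeff {j : ℕ} (hj : j ∈ range (n + 1)) :=
    choose_mul_pow_le_ajn_and_ajn_le hb hc hd habcd.le hn (mem_range_succ_iff.mp hj)
  rw [add_pow_div_pow_eq_sum hd.ne', add_pow_div_pow_eq_sum hb.ne', Phi]
  constructor
  · gcongr with j hj
    exact (hcoeff hj).1
  · gcongr with j hj
    exact (hcoeff hj).2

/-- Two-sided bounds on the polynomial `Φ_n`. -/
theorem Phi_bounds (a b c d : ℝ) (ha : 0 < a) (hb : 0 < b) (hc : 0 < c) (hd : 0 < d)
    (habcd : b * c < a * d) (n : ℕ) (hn : 2 ≤ n) (x y : ℝ) (hx : 0 ≤ x) (hy : 0 ≤ y) :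
    (c * x + d * y) ^ n / d ^ n ≤ Phi a b c d n x y ∧
      Phi a b c d n x y ≤ (a * x + b * y) ^ n / b ^ n :=
  Phi_bounds_general a b c d hb hc hd habcd n hn x y hx hy
end

section
/- Let S be the symmetric matrix with rows (a·c, b·c) and (b·c, b·d), and for ρ > 1 let M^ρ(X) be the matrix with rows (a·α_ρ(X₁), b·α_ρ(X₁)) and (c·α_ρ(X₂), d·α_ρ(X₂)). Then for every X ∈ ℝ², the matrix S·M^ρ(X) is symmetric and positive semidefinite, with det(S·M^ρ(X)) = b·c·(a·d−b·c)²·α_ρ(X₁)·α_ρ(X₂). -/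
/-!
Writing `p = (a, b)` and `q = (c, d)`, the product `S·M^ρ(X)` equals
`c α_ρ(X₁) · p pᵀ + b α_ρ(X₂) · q qᵀ`, a nonnegative combination of rank-one Gram matrices,
hence symmetric positive semidefinite. The determinant is `det S · det M^ρ(X)`, where
`det S = b c (a d - b c)` and `det M^ρ(X) = (a d - b c) α_ρ(X₁) α_ρ(X₂)`.
-/

/-- The cutoff function `α_ρ`. -/
noncomputable def alphaCut (ρ : ℝ) (z : ℝ) : ℝ :=
  if z ≤ 0 then 0
  else if z ≤ ρ - 1 then z
  else if z ≤ ρ then (ρ - 1) * (ρ - z)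
  else 0

/-- The truncated mobility matrix `M^ρ(X)`. -/
noncomputable def Mrho (a b c d ρ x y : ℝ) : Matrix (Fin 2) (Fin 2) ℝ :=
  !![a * alphaCut ρ x, b * alphaCut ρ x; c * alphaCut ρ y, d * alphaCut ρ y]

open Matrix

lemma alphaCut_nonneg {ρ : ℝ} (hρ : 1 ≤ ρ) (z : ℝ) : 0 ≤ alphaCut ρ z := by
  unfold alphaCut
  split_ifs <;> nlinarith

lemma fin_two_mul_eq_smul_vecMulVec_add_smul_vecMulVec (a b c d u v : ℝ) :
    !![a * c, b * c; b * c, b * d] * !![a * u, b * u; c * v, d * v] =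
      (c * u) • vecMulVec ![a, b] ![a, b] + (b * v) • vecMulVec ![c, d] ![c, d] := by
  ext i j
  fin_cases i <;> fin_cases j <;>
    simp [mul_apply, Fin.sum_univ_two] <;> ring

lemma posSemidef_smul_vecMulVec_add_smul_vecMulVec {n : Type*} [Fintype n]
    {s t : ℝ} (hs : 0 ≤ s) (ht : 0 ≤ t) (p q : n → ℝ) :
    (s • vecMulVec p p + t • vecMulVec q q).PosSemidef :=
  ((posSemidef_vecMulVec_self_star p).smul hs).add ((posSemidef_vecMulVec_self_star q).smul ht)

theorem SMrho_posSemidef_general (a b c d : ℝ) (hb : 0 < b) (hc : 0 < c)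
    (ρ : ℝ) (hρ : 1 < ρ) (x y : ℝ) :
    ((!![a * c, b * c; b * c, b * d] : Matrix (Fin 2) (Fin 2) ℝ) *
        Mrho a b c d ρ x y).IsSymm ∧
      ((!![a * c, b * c; b * c, b * d] : Matrix (Fin 2) (Fin 2) ℝ) *
        Mrho a b c d ρ x y).PosSemidef ∧
      ((!![a * c, b * c; b * c, b * d] : Matrix (Fin 2) (Fin 2) ℝ) *
          Mrho a b c d ρ x y).det =
        b * c * (a * d - b * c) ^ 2 * alphaCut ρ x * alphaCut ρ y := by
  have hPSD : ((!![a * c, b * c; b * c, b * d] : Matrix (Fin 2) (Fin 2) ℝ) *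
      Mrho a b c d ρ x y).PosSemidef := by
    rw [Mrho, fin_two_mul_eq_smul_vecMulVec_add_smul_vecMulVec]
    exact posSemidef_smul_vecMulVec_add_smul_vecMulVec
      (mul_nonneg hc.le (alphaCut_nonneg hρ.le x)) (mul_nonneg hb.le (alphaCut_nonneg hρ.le y)) _ _
  refine ⟨isHermitian_iff_isSymm.mp hPSD.isHermitian, hPSD, ?_⟩
  rw [det_mul, Mrho, det_fin_two_of, det_fin_two_of]
  ring

/-- `S·M^ρ(X)` is symmetric positive semidefinite with an explicit determinant. -/
theorem SMrho_posSemidef (a b c d : ℝ) (ha : 0 < a) (hb : 0 < b) (hc : 0 < c)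
    (hd : 0 < d) (habcd : b * c < a * d) (ρ : ℝ) (hρ : 1 < ρ) (x y : ℝ) :
    ((!![a * c, b * c; b * c, b * d] : Matrix (Fin 2) (Fin 2) ℝ) *
        Mrho a b c d ρ x y).IsSymm ∧
      ((!![a * c, b * c; b * c, b * d] : Matrix (Fin 2) (Fin 2) ℝ) *
        Mrho a b c d ρ x y).PosSemidef ∧
      ((!![a * c, b * c; b * c, b * d] : Matrix (Fin 2) (Fin 2) ℝ) *
          Mrho a b c d ρ x y).det =
        b * c * (a * d - b * c) ^ 2 * alphaCut ρ x * alphaCut ρ y :=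
  SMrho_posSemidef_general a b c d hb hc ρ hρ x y
end
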